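/- arXiv:1907.13462 — 6 statements merged into one kernel-verified Lean document; each statement's English description precedes it below -/
import Mathlib

section
/- Let X be a k-regular graph on v vertices with least adjacency eigenvalue τ < 0, and let α(X) be the maximum size of a coclique (independent set) in X. Then α(X) ≤ v(−τ)/(k − τ). -/
/-!
For any vector `x`, the least eigenvalue bounds the Rayleigh quotient: `τ ‖x‖² ≤ xᵀ A x`.
Take `x = v·1_S − s·1` for a coclique `S` of size `s`. As `S` spans no edge, `1_Sᵀ A 1_S = 0`, and
regularity gives `A 1 = k 1`, so `xᵀ A x = −k v s²` while `‖x‖² = v s (v − s)`. Dividing by `v s`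
yields `τ (v − s) ≤ −k s`, i.e. `s (k − τ) ≤ −τ v`.
-/

open Matrix Finset
open scoped ComplexOrder

namespace Matrix.IsHermitian
variable {n : Type*} [Fintype n] [DecidableEq n]

theorem posSemidef_sub_algebraMap {𝕜 : Type*} [RCLike 𝕜] {A : Matrix n n 𝕜} (hA : A.IsHermitian)
    {τ : ℝ} (hτ : ∀ μ ∈ spectrum ℝ A, τ ≤ μ) :
    (A - algebraMap ℝ (Matrix n n 𝕜) τ).PosSemidef := by
  have hB : (A - algebraMap ℝ (Matrix n n 𝕜) τ).IsHermitian := by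
    refine hA.sub ?_
    simp [Algebra.algebraMap_eq_smul_one, IsHermitian, conjTranspose_smul]
  rw [hB.posSemidef_iff_eigenvalues_nonneg]
  intro i
  have hmem := hB.eigenvalues_mem_spectrum_real i
  rw [← spectrum.sub_singleton_eq] at hmem
  obtain ⟨μ, hμ, _, rfl, hi⟩ := hmem
  simpa [← hi] using hτ μ hμ

theorem mul_dotProduct_self_le {A : Matrix n n ℝ} (hA : A.IsHermitian) {τ : ℝ}
    (hτ : ∀ μ ∈ spectrum ℝ A, τ ≤ μ) (x : n → ℝ) : τ * (x ⬝ᵥ x) ≤ x ⬝ᵥ A *ᵥ x := by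
  have hx := (hA.posSemidef_sub_algebraMap hτ).dotProduct_mulVec_nonneg x
  simp only [star_trivial, Algebra.algebraMap_eq_smul_one, sub_mulVec, smul_mulVec, one_mulVec,
    dotProduct_sub, dotProduct_smul, smul_eq_mul] at hx
  linarith

end Matrix.IsHermitian

namespace Finset
variable {V α : Type*} [Fintype V] [CommRing α]

noncomputable def centredIndicator (S : Finset V) : V → α :=
  (Fintype.card V : α) • (S : Set V).indicator 1 - (#S : α) • 1

theorem indicator_dotProduct_indicator (S : Finset V) :
    (S : Set V).indicator 1 ⬝ᵥ (S : Set V).indicator (1 : V → α) = #S := by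
  classical
  simp [dotProduct, Set.indicator_apply]

theorem indicator_dotProduct_one (S : Finset V) :
    (S : Set V).indicator 1 ⬝ᵥ (1 : V → α) = #S := by
  classical
  simp [dotProduct, Set.indicator_apply]

theorem one_dotProduct_indicator (S : Finset V) :
    (1 : V → α) ⬝ᵥ (S : Set V).indicator 1 = #S := by
  rw [dotProduct_comm, indicator_dotProduct_one]

theorem centredIndicator_dotProduct_self (S : Finset V) :
    centredIndicator S ⬝ᵥ (centredIndicator S : V → α)
      = Fintype.card V * #S * (Fintype.card V - #S) := by
  simp only [centredIndicator, dotProduct_sub, sub_dotProduct, dotProduct_smul, smul_dotProduct,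
    indicator_dotProduct_indicator, indicator_dotProduct_one, one_dotProduct_indicator,
    one_dotProduct_one, smul_eq_mul]
  ring

end Finset

namespace SimpleGraph
variable {V α : Type*} [Fintype V] {G : SimpleGraph V} [DecidableRel G.Adj]

theorem IsRegularOfDegree.adjMatrix_mulVec_one [NonAssocSemiring α] {k : ℕ}
    (hd : G.IsRegularOfDegree k) : G.adjMatrix α *ᵥ 1 = (k : α) • 1 := by
  ext v
  simp [hd v]

theorem IsRegularOfDegree.one_vecMul_adjMatrix [NonAssocSemiring α] {k : ℕ}
    (hd : G.IsRegularOfDegree k) : 1 ᵥ* G.adjMatrix α = (k : α) • 1 := by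
  ext v
  simp [hd v]

theorem IsIndepSet.indicator_dotProduct_adjMatrix_mulVec_indicator [NonAssocSemiring α]
    {s : Set V} (hs : G.IsIndepSet s) :
    s.indicator 1 ⬝ᵥ G.adjMatrix α *ᵥ s.indicator 1 = 0 := by
  rw [dotProduct_mulVec_adjMatrix]
  refine Finset.sum_eq_zero fun i _ => Finset.sum_eq_zero fun j _ => ?_
  by_cases hij : G.Adj i j
  · by_cases hi : i ∈ s
    · have hj : j ∉ s := fun hj => hs hi hj hij.ne hij
      simp [hij, hj]
    · simp [hij, hi]
  · simp [hij]

theorem IsIndepSet.centredIndicator_dotProduct_adjMatrix_mulVec [CommRing α] {k : ℕ}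
    (hd : G.IsRegularOfDegree k) {S : Finset V} (hS : G.IsIndepSet S) :
    S.centredIndicator ⬝ᵥ G.adjMatrix α *ᵥ S.centredIndicator
      = -(k * Fintype.card V * #S ^ 2) := by
  simp only [Finset.centredIndicator, mulVec_sub, mulVec_smul, dotProduct_sub, sub_dotProduct,
    dotProduct_smul, smul_dotProduct, dotProduct_mulVec 1, hd.one_vecMul_adjMatrix,
    hS.indicator_dotProduct_adjMatrix_mulVec_indicator, hd.adjMatrix_mulVec_one,
    Finset.one_dotProduct_indicator, Finset.indicator_dotProduct_one, one_dotProduct_one,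
    smul_eq_mul]
  ring

end SimpleGraph

theorem hoffman_bound_general {V : Type*} [Fintype V] [DecidableEq V]
    (G : SimpleGraph V) [DecidableRel G.Adj]
    (k : ℕ) (hreg : G.IsRegularOfDegree k)
    (τ : ℝ)
    (hτmin : ∀ x ∈ spectrum ℝ (G.adjMatrix ℝ), τ ≤ x) (hτneg : τ < 0)
    (S : Finset V) (hS : ∀ x ∈ S, ∀ y ∈ S, x ≠ y → ¬ G.Adj x y) :
    (S.card : ℝ) ≤ (Fintype.card V : ℝ) * (-τ) / ((k : ℝ) - τ) := by
  have hrayleigh := (G.isHermitian_adjMatrix ℝ).mul_dotProduct_self_le hτmin S.centredIndicator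
  rw [S.centredIndicator_dotProduct_self,
    SimpleGraph.IsIndepSet.centredIndicator_dotProduct_adjMatrix_mulVec hreg hS] at hrayleigh
  have hsv : (#S : ℝ) ≤ Fintype.card V := by exact_mod_cast S.card_le_univ
  rw [le_div_iff₀ (by linarith [(k.cast_nonneg : (0 : ℝ) ≤ k)])]
  rcases (Nat.cast_nonneg (α := ℝ) #S).eq_or_lt with hs | hs
  · rw [← hs]
    nlinarith
  · have hvs : 0 < (Fintype.card V : ℝ) * #S := mul_pos (hs.trans_le hsv) hs
    have hfactored : (Fintype.card V : ℝ) * #S * (τ * (Fintype.card V - #S) + k * #S) ≤ 0 := by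
      linarith
    linarith [nonpos_of_mul_nonpos_right hfactored hvs]

/-- Hoffman ratio bound: in a `k`-regular graph on `v` vertices with least adjacency
eigenvalue `τ < 0`, any coclique has size at most `v·(−τ)/(k − τ)`. -/
theorem hoffman_bound {V : Type*} [Fintype V] [DecidableEq V]
    (G : SimpleGraph V) [DecidableRel G.Adj]
    (k : ℕ) (hk : 0 < k) (hreg : G.IsRegularOfDegree k)
    (τ : ℝ) (hτmem : τ ∈ spectrum ℝ (G.adjMatrix ℝ))
    (hτmin : ∀ x ∈ spectrum ℝ (G.adjMatrix ℝ), τ ≤ x) (hτneg : τ < 0)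
    (S : Finset V) (hS : ∀ x ∈ S, ∀ y ∈ S, x ≠ y → ¬ G.Adj x y) :
    (S.card : ℝ) ≤ (Fintype.card V : ℝ) * (-τ) / ((k : ℝ) - τ) :=
  hoffman_bound_general G k hreg τ hτmin hτneg S hS
end

section
/- A connected regular graph whose adjacency matrix has exactly four distinct eigenvalues is walk-regular: for every r ≥ 0, the diagonal entries (A^r)_{xx} are equal for all vertices x. -/
/-!
Let `θ₁, θ₂, θ₃` be the eigenvalues of `A` other than the degree `k` and
`Q = (A - θ₁)(A - θ₂)(A - θ₃)`. Since `A` is diagonalizable, `(A - k) Q = 0`, so every column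
of `Q` is a `k`-eigenvector, hence constant because `G` is connected; as `Q` is symmetric, its
diagonal is constant. Dividing `X ^ r` by the monic cubic defining `Q` writes `A ^ r` as a linear
combination of `1`, `A`, `A ^ 2` and `Q`, whose diagonals are constant (`1`, `0`, `k` and the
above).
-/

open Matrix Polynomial

section FunctionalCalculus

variable {R A : Type*} {p : A → Prop} [CommRing R] [StarRing R] [MetricSpace R]
  [IsTopologicalRing R] [ContinuousStar R] [TopologicalSpace A] [Ring A] [StarRing A]
  [Algebra R A] [ContinuousFunctionalCalculus R A p]

theorem aeval_eq_zero_of_forall_mem_spectrum_isRoot {a : A} (ha : p a) {q : R[X]}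
    (hq : ∀ μ ∈ spectrum R a, q.IsRoot μ) : aeval a q = 0 := by
  rw [← cfc_polynomial q a ha, cfc_congr (g := 0) hq, cfc_zero]

theorem mul_aeval_nodal_erase_eq_smul [DecidableEq R] {a : A} (ha : p a) {s : Finset R}
    (hs : spectrum R a ⊆ s) {μ : R} (hμ : μ ∈ s) :
    a * aeval a (Lagrange.nodal (s.erase μ) id) =
      μ • aeval a (Lagrange.nodal (s.erase μ) id) := by
  have h := aeval_eq_zero_of_forall_mem_spectrum_isRoot ha (q := Lagrange.nodal s id)
    fun ν hν => Lagrange.eval_nodal_at_node (v := id) (hs hν)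
  rwa [Lagrange.nodal_eq_mul_nodal_erase hμ, aeval_mul, map_sub, aeval_X, aeval_C, sub_mul,
    sub_eq_zero, ← Algebra.smul_def, id] at h

end FunctionalCalculus

section PolynomialDivision

variable {R B : Type*} [CommRing R] [Ring B] [Algebra R B]

theorem aeval_mul_eq_eval_smul {a b : B} {μ : R} (h : a * b = μ • b) (f : R[X]) :
    aeval a f * b = f.eval μ • b := by
  induction f using Polynomial.induction_on' with
  | add f g hf hg => rw [map_add, add_mul, hf, hg, eval_add, add_smul]
  | monomial n c =>
    have hpow : a ^ n * b = μ ^ n • b := by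
      induction n with
      | zero => simp
      | succ n ih => rw [pow_succ', mul_assoc, ih, mul_smul_comm, h, smul_smul, pow_succ]
    rw [aeval_monomial, mul_assoc, hpow, eval_monomial, mul_smul_comm, ← Algebra.smul_def,
      smul_smul, mul_comm]

theorem aeval_mem_span_pow_of_degree_lt {f : R[X]} {n : ℕ} (hf : f.degree < n) (a : B) :
    aeval a f ∈ Submodule.span R ((a ^ ·) '' Set.Iio n) := by
  rw [aeval_eq_sum_range]
  refine Submodule.sum_mem _ fun i _ => ?_
  rcases lt_or_ge i n with hi | hi
  · exact Submodule.smul_mem _ _ (Submodule.subset_span ⟨i, hi, rfl⟩)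
  · rw [coeff_eq_zero_of_degree_lt (hf.trans_le (by exact_mod_cast hi)), zero_smul]
    exact Submodule.zero_mem _

theorem aeval_mem_span_insert_of_mul_eq_smul [Nontrivial R] {a : B} {μ : R} {q : R[X]}
    (hq : q.Monic) (h : a * aeval a q = μ • aeval a q) (f : R[X]) :
    aeval a f ∈ Submodule.span R (insert (aeval a q) ((a ^ ·) '' Set.Iio q.natDegree)) := by
  have hdiv : aeval a f = (f /ₘ q).eval μ • aeval a q + aeval a (f %ₘ q) := by
    conv_lhs => rw [← modByMonic_add_div f q]
    rw [map_add, mul_comm, aeval_mul, aeval_mul_eq_eval_smul h, add_comm]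
  rw [hdiv]
  refine add_mem (Submodule.smul_mem _ _ (Submodule.subset_span (Set.mem_insert _ _)))
    (Submodule.span_mono (Set.subset_insert _ _) (aeval_mem_span_pow_of_degree_lt ?_ a))
  exact (degree_modByMonic_lt f hq).trans_le degree_le_natDegree

end PolynomialDivision

def Matrix.constDiagSubmodule (n R : Type*) [Semiring R] : Submodule R (Matrix n n R) where
  carrier := {M | ∀ i j, M i i = M j j}
  add_mem' hM hN i j := by simp only [add_apply, hM i j, hN i j]
  zero_mem' _ _ := rfl
  smul_mem' c M hM i j := by simp only [smul_apply, hM i j]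

namespace SimpleGraph

variable {V : Type*} [Fintype V] [DecidableEq V] {G : SimpleGraph V} [DecidableRel G.Adj] {k : ℕ}

theorem IsRegularOfDegree.lapMatrix_eq_smul_one_sub_adjMatrix {R : Type*} [Ring R]
    (hreg : G.IsRegularOfDegree k) :
    G.lapMatrix R = (k : R) • 1 - G.adjMatrix R := by
  rw [lapMatrix, degMatrix, funext fun v => congrArg (Nat.cast : ℕ → R) (hreg v),
    ← smul_one_eq_diagonal]

theorem IsRegularOfDegree.mem_spectrum_adjMatrix [Nonempty V] (hreg : G.IsRegularOfDegree k) :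
    (k : ℝ) ∈ spectrum ℝ (G.adjMatrix ℝ) := by
  rw [spectrum.mem_iff, Algebra.algebraMap_eq_smul_one,
    ← hreg.lapMatrix_eq_smul_one_sub_adjMatrix, isUnit_iff_isUnit_det, det_lapMatrix_eq_zero]
  exact not_isUnit_zero

theorem Connected.apply_eq_of_adjMatrix_mulVec_eq_smul (hconn : G.Connected)
    (hreg : G.IsRegularOfDegree k) {v : V → ℝ} (hv : G.adjMatrix ℝ *ᵥ v = (k : ℝ) • v)
    (i j : V) : v i = v j := by
  have hlap : G.lapMatrix ℝ *ᵥ v = 0 := by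
    rw [hreg.lapMatrix_eq_smul_one_sub_adjMatrix, sub_mulVec, smul_mulVec, one_mulVec, hv,
      sub_self]
  exact (lapMatrix_mulVec_eq_zero_iff_forall_reachable G).1 hlap i j (hconn i j)

theorem Connected.apply_eq_of_adjMatrix_mul_eq_smul (hconn : G.Connected)
    (hreg : G.IsRegularOfDegree k) {Q : Matrix V V ℝ} (hQ : G.adjMatrix ℝ * Q = (k : ℝ) • Q)
    (i i' j : V) : Q i j = Q i' j :=
  hconn.apply_eq_of_adjMatrix_mulVec_eq_smul hreg (v := fun l => Q l j)
    (funext fun l => congrFun₂ hQ l j) i i'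

theorem IsRegularOfDegree.adjMatrix_pow_mem_constDiagSubmodule {R : Type*} [Semiring R]
    (hreg : G.IsRegularOfDegree k) {r : ℕ} (hr : r < 3) :
    G.adjMatrix R ^ r ∈ constDiagSubmodule V R := by
  intro i j
  interval_cases r
  · simp
  · simp
  · rw [sq, adjMatrix_mul_self_apply_self, adjMatrix_mul_self_apply_self, hreg i, hreg j]

theorem Connected.aeval_adjMatrix_mem_constDiagSubmodule (hconn : G.Connected)
    (hreg : G.IsRegularOfDegree k) {q : ℝ[X]}
    (hq : G.adjMatrix ℝ * aeval (G.adjMatrix ℝ) q = (k : ℝ) • aeval (G.adjMatrix ℝ) q) :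
    aeval (G.adjMatrix ℝ) q ∈ constDiagSubmodule V ℝ := by
  have hsymm : (aeval (G.adjMatrix ℝ) q).IsHermitian := by
    rw [← cfc_polynomial q _ (G.isHermitian_adjMatrix (R := ℝ)).isSelfAdjoint]
    exact cfc_predicate _ _
  set Q := aeval (G.adjMatrix ℝ) q
  intro i j
  calc Q i i = Q j i := hconn.apply_eq_of_adjMatrix_mul_eq_smul hreg hq i j i
    _ = Q i j := by simpa using hsymm.apply i j
    _ = Q j j := hconn.apply_eq_of_adjMatrix_mul_eq_smul hreg hq i j j

end SimpleGraph

/-- A connected regular graph whose adjacency matrix has exactly four distinct eigenvalues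
is walk-regular: for every `r`, the diagonal entries of `A^r` are all equal. -/
theorem walkRegular_of_four_eigenvalues {V : Type*} [Fintype V] [DecidableEq V]
    (G : SimpleGraph V) [DecidableRel G.Adj]
    (hconn : G.Connected) (k : ℕ) (hreg : G.IsRegularOfDegree k)
    (hfour : (spectrum ℝ (G.adjMatrix ℝ)).ncard = 4) :
    ∀ (r : ℕ) (x y : V), ((G.adjMatrix ℝ) ^ r) x x = ((G.adjMatrix ℝ) ^ r) y y := by
  intro r x y
  have : Nonempty V := hconn.nonempty
  set A := G.adjMatrix ℝ
  have hfin : (spectrum ℝ A).Finite := Set.finite_of_ncard_ne_zero (by rw [hfour]; norm_num)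
  have hk : (k : ℝ) ∈ hfin.toFinset := hfin.mem_toFinset.2 hreg.mem_spectrum_adjMatrix
  set q := Lagrange.nodal (hfin.toFinset.erase (k : ℝ)) id
  have hdeg : q.natDegree = 3 := by
    rw [Lagrange.natDegree_nodal, Finset.card_erase_of_mem hk,
      ← Set.ncard_eq_toFinset_card _ hfin, hfour]
  have hAq : A * aeval A q = (k : ℝ) • aeval A q :=
    mul_aeval_nodal_erase_eq_smul (G.isHermitian_adjMatrix (R := ℝ)).isSelfAdjoint
      hfin.coe_toFinset.superset hk
  have hspan := aeval_mem_span_insert_of_mul_eq_smul Lagrange.nodal_monic hAq (X ^ r)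
  rw [aeval_X_pow, hdeg] at hspan
  suffices hgen : insert (aeval A q) ((A ^ ·) '' Set.Iio 3) ⊆ constDiagSubmodule V ℝ from
    Submodule.span_le.2 hgen hspan x y
  rw [Set.insert_subset_iff, Set.image_subset_iff]
  exact ⟨hconn.aeval_adjMatrix_mem_constDiagSubmodule hreg hAq,
    fun _ hr => hreg.adjMatrix_pow_mem_constDiagSubmodule hr⟩
end

section
/- Let Γ be a co-edge-regular graph cospectral with the s-clique extension of T(n), s ≥ 2, n ≥ 4. Then every pair of distinct non-adjacent vertices of Γ has exactly μ = 4s common neighbors. -/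
open Matrix Polynomial

/-!
Only the traces of `A⁰, A², A³` (`A` the adjacency matrix) are needed. For a `k`-regular graph in
which non-adjacent vertices have `μ` common neighbours, sorting the `k²` walks of length two
from `v` by whether their end vertex is `v`, a neighbour, or a non-neighbour gives
`k² = k + (A³)ᵥᵥ + μ (N - 1 - k)`, so
`tr A² = N k` and `tr A³ = N (k² - k - μ (N - 1 - k))`. The spectrum determines the moments
`tr Aʲ`: `j = 0` gives `N = s n (n - 1) / 2`, `j = 2` gives `k = s (2n - 3) - 1`, and then
`j = 3`, with `N - 1 - k = s (n - 2) (n - 3) / 2 ≠ 0`, forces `μ = 4s`.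
-/

namespace Matrix.IsHermitian

variable {𝕜 n : Type*} [RCLike 𝕜] [Fintype n] [DecidableEq n] {A : Matrix n n 𝕜}

theorem trace_pow_eq_sum_roots_charpoly_pow (hA : A.IsHermitian) (k : ℕ) :
    (A ^ k).trace = (A.charpoly.roots.map (· ^ k)).sum := by
  conv_lhs => rw [hA.spectral_theorem, ← map_pow, Unitary.conjStarAlgAut_apply, trace_mul_cycle,
    Unitary.coe_star_mul_self, one_mul, diagonal_pow, trace_diagonal]
  simp [hA.roots_charpoly_eq_eigenvalues, Multiset.map_map]

end Matrix.IsHermitian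

theorem Polynomial.roots_X_sub_C_mul_pow_mul_pow_mul_pow {R : Type*} [CommRing R] [IsDomain R]
    (a b c d : R) (e₂ e₃ e₄ : ℕ) :
    ((X - C a) * (X - C b) ^ e₂ * (X - C c) ^ e₃ * (X - C d) ^ e₄).roots =
      {a} + e₂ • {b} + e₃ • {c} + e₄ • {d} := by
  simp [roots_mul, X_sub_C_ne_zero]

section Casts

variable {K : Type*} [Field K] [CharZero K]

theorem cast_sq_sub_three_mul_div_two {n : ℕ} (hn : 3 ≤ n) :
    (((n ^ 2 - 3 * n) / 2 : ℕ) : K) = ((n : K) ^ 2 - 3 * n) / 2 := by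
  have hle : 3 * n ≤ n ^ 2 := by nlinarith
  have heven : Even (n ^ 2 - 3 * n) := by
    rw [Nat.even_sub hle]
    rcases Nat.even_or_odd n with h | h <;> simp [Nat.even_pow, h, parity_simps]
  rw [Nat.cast_div_charZero heven.two_dvd]
  push_cast [hle]
  ring

theorem cast_pred_mul_mul_pred_div_two {s n : ℕ} (hs : 1 ≤ s) (hn : 1 ≤ n) :
    (((s - 1) * n * (n - 1) / 2 : ℕ) : K) = ((s : K) - 1) * n * (n - 1) / 2 := by
  have hdvd : 2 ∣ (s - 1) * n * (n - 1) := by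
    rw [mul_assoc]
    exact (Nat.even_mul_pred_self n).two_dvd.mul_left _
  rw [Nat.cast_div_charZero hdvd]
  push_cast [hs, hn]
  ring

end Casts

namespace SimpleGraph

open Finset

variable {V : Type*} [Fintype V] [DecidableEq V] {G : SimpleGraph V} [DecidableRel G.Adj]
  {α : Type*}

theorem adjMatrix_mul_self_apply [NonAssocSemiring α] (v w : V) :
    (G.adjMatrix α * G.adjMatrix α) v w = #(G.neighborFinset v ∩ G.neighborFinset w) := by
  rw [adjMatrix_mul_apply]
  simp [adjMatrix_apply, sum_boole, filter_mem_eq_inter.symm, adj_comm]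

theorem adjMatrix_sq_eq_of_card_common_not_adj [Semiring α] {μ : ℕ}
    (hμ : ∀ v w, v ≠ w → ¬G.Adj v w → #(G.neighborFinset v ∩ G.neighborFinset w) = μ) :
    G.adjMatrix α ^ 2 = diagonal (fun v ↦ (G.degree v : α)) +
      G.adjMatrix α ⊙ (G.adjMatrix α ^ 2) + μ • Gᶜ.adjMatrix α := by
  ext v w
  simp only [Matrix.add_apply, Matrix.smul_apply, hadamard_apply, diagonal_apply, adjMatrix_apply,
    compl_adj, sq, adjMatrix_mul_self_apply]
  obtain rfl | hne := eq_or_ne v w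
  · simp [card_neighborFinset_eq_degree]
  by_cases hadj : G.Adj v w
  · simp [hne, hadj]
  · simp [hne, hadj, hμ v w hne hadj]

variable [Ring α] {k μ : ℕ}

theorem IsRegularOfDegree.adjMatrix_pow_three_apply_self (hk : G.IsRegularOfDegree k)
    (hμ : ∀ v w, v ≠ w → ¬G.Adj v w → #(G.neighborFinset v ∩ G.neighborFinset w) = μ) (v : V) :
    (G.adjMatrix α ^ 3) v v + k + μ * (Fintype.card V - 1 - k) = k ^ 2 := by
  have hrow : G.adjMatrix α *ᵥ 1 = Function.const V (k : α) := funext fun u ↦ by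
    simpa using adjMatrix_mulVec_const_apply_of_regular (a := (1 : α)) hk (v := u)
  have hsq : (G.adjMatrix α ^ 2 *ᵥ (1 : V → α)) v = k ^ 2 := by
    rw [sq, ← mulVec_mulVec, hrow, adjMatrix_mulVec_const_apply_of_regular hk, sq]
  have hcube : (G.adjMatrix α ⊙ (G.adjMatrix α ^ 2) *ᵥ 1) v = (G.adjMatrix α ^ 3) v v := by
    rw [pow_succ' (G.adjMatrix α) 2, mul_apply]
    simp only [mulVec, dotProduct, hadamard_apply, Pi.one_apply, mul_one]
    refine sum_congr rfl fun w _ ↦ ?_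
    rw [sq, adjMatrix_mul_self_apply, adjMatrix_mul_self_apply, inter_comm]
  have hcompl : (Gᶜ.degree v : α) = Fintype.card V - 1 - k := by
    have hlt : k < Fintype.card V := hk v ▸ G.degree_lt_card_verts v
    rw [hk.compl v, Nat.cast_sub (by omega), Nat.cast_sub (by omega), Nat.cast_one]
  rw [← hsq, adjMatrix_sq_eq_of_card_common_not_adj hμ, add_mulVec, add_mulVec, Pi.add_apply,
    Pi.add_apply, hcube, smul_mulVec, Pi.smul_apply]
  simp [mulVec_diagonal, hk v, hcompl, add_comm]

theorem IsRegularOfDegree.trace_adjMatrix_sq (hk : G.IsRegularOfDegree k) :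
    (G.adjMatrix α ^ 2).trace = Fintype.card V * k := by
  simp only [trace, diag_apply, sq, adjMatrix_mul_self_apply_self, hk.degree_eq, sum_const,
    card_univ, nsmul_eq_mul]

theorem IsRegularOfDegree.trace_adjMatrix_pow_three (hk : G.IsRegularOfDegree k)
    (hμ : ∀ v w, v ≠ w → ¬G.Adj v w → #(G.neighborFinset v ∩ G.neighborFinset w) = μ) :
    (G.adjMatrix α ^ 3).trace =
      Fintype.card V * (k ^ 2 - k - μ * (Fintype.card V - 1 - k)) := by
  have hdiag (v : V) : (G.adjMatrix α ^ 3) v v = k ^ 2 - k - μ * (Fintype.card V - 1 - k) := by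
    rw [← hk.adjMatrix_pow_three_apply_self hμ v]
    abel
  simp only [trace, diag_apply, hdiag, sum_const, card_univ, nsmul_eq_mul]

end SimpleGraph

/-- `∑ θʲ` over the spectrum, with multiplicities, of the `s`-clique extension of `T(n)`. -/
noncomputable def triangularCliqueExtMoment (s n : ℝ) (j : ℕ) : ℝ :=
  (s * (2 * n - 3) - 1) ^ j + (n - 1) * (s * (n - 3) - 1) ^ j +
    (n ^ 2 - 3 * n) / 2 * (-s - 1) ^ j + (s - 1) * n * (n - 1) / 2 * (-1) ^ j

theorem eq_four_mul_of_triangularCliqueExtMoments {s n N k μ : ℝ} (hs : 1 ≤ s) (hn : 4 ≤ n)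
    (h₀ : N = triangularCliqueExtMoment s n 0) (h₂ : N * k = triangularCliqueExtMoment s n 2)
    (h₃ : triangularCliqueExtMoment s n 3 = N * (k ^ 2 - k - μ * (N - 1 - k))) :
    μ = 4 * s := by
  unfold triangularCliqueExtMoment at h₀ h₂ h₃
  have hN : N = s * n * (n - 1) / 2 := by rw [h₀]; ring
  subst hN
  have hn₁ : 0 < n - 1 := by linarith
  have hn₂ : 0 < n - 2 := by linarith
  have hn₃ : 0 < n - 3 := by linarith
  have hN₀ : s * n * (n - 1) / 2 ≠ 0 := by positivity
  have hk : k = s * (2 * n - 3) - 1 := mul_left_cancel₀ hN₀ (by rw [h₂]; ring)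
  subst hk
  have hgap : s * n * (n - 1) / 2 * (s * (n - 2) * (n - 3) / 2) ≠ 0 := by positivity
  refine mul_right_cancel₀ hgap ?_
  linear_combination h₃

/-- A co-edge-regular graph cospectral with the `s`-clique extension of `T(n)`
(`s ≥ 2`, `n ≥ 4`) has `μ = 4s`: every pair of distinct non-adjacent vertices has
exactly `4s` common neighbours. -/
theorem mu_eq_four_s {V : Type*} [Fintype V] [DecidableEq V]
    (G : SimpleGraph V) [DecidableRel G.Adj]
    (s n : ℕ) (hs : 2 ≤ s) (hn : 4 ≤ n)
    (hreg : ∃ k, G.IsRegularOfDegree k)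
    (hcoedge : ∃ μ, ∀ x y : V, x ≠ y → ¬ G.Adj x y →
      (G.neighborFinset x ∩ G.neighborFinset y).card = μ)
    (hspec : (G.adjMatrix ℝ).charpoly =
      (X - C ((s : ℝ) * (2 * n - 3) - 1)) *
        (X - C ((s : ℝ) * ((n : ℝ) - 3) - 1)) ^ (n - 1) *
        (X - C (-(s : ℝ) - 1)) ^ ((n ^ 2 - 3 * n) / 2) *
        (X - C (-1)) ^ ((s - 1) * n * (n - 1) / 2)) :
    ∀ x y : V, x ≠ y → ¬ G.Adj x y →
      (G.neighborFinset x ∩ G.neighborFinset y).card = 4 * s := by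
  intro x y hxy hnadj
  obtain ⟨k, hk⟩ := hreg
  obtain ⟨μ, hμ⟩ := hcoedge
  have hmoment (j : ℕ) : (G.adjMatrix ℝ ^ j).trace = triangularCliqueExtMoment s n j := by
    rw [(G.isHermitian_adjMatrix ℝ).trace_pow_eq_sum_roots_charpoly_pow, hspec,
      roots_X_sub_C_mul_pow_mul_pow_mul_pow]
    simp only [Multiset.map_add, Multiset.map_nsmul, Multiset.map_singleton, Multiset.sum_add,
      Multiset.sum_nsmul, Multiset.sum_singleton, nsmul_eq_mul, Nat.cast_pred (by omega : 0 < n),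
      cast_sq_sub_three_mul_div_two (by omega : 3 ≤ n),
      cast_pred_mul_mul_pred_div_two (by omega : 1 ≤ s) (by omega : 1 ≤ n)]
    rfl
  have h₀ : (Fintype.card V : ℝ) = triangularCliqueExtMoment s n 0 := by
    simpa using hmoment 0
  have h₂ := (hk.trace_adjMatrix_sq (α := ℝ)).symm.trans (hmoment 2)
  have h₃ := (hmoment 3).symm.trans (hk.trace_adjMatrix_pow_three hμ)
  have hs₁ : (1 : ℝ) ≤ s := by exact_mod_cast (by omega : 1 ≤ s)
  have hn₄ : (4 : ℝ) ≤ n := by exact_mod_cast hn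
  rw [hμ x y hxy hnadj]
  exact_mod_cast eq_four_mul_of_triangularCliqueExtMoments hs₁ hn₄ h₀ h₂ h₃
end

section
/- Let Γ be a co-edge-regular graph cospectral with the s-clique extension of T(n), and fix a vertex ∞ with local graph Γ(∞) on k = s(2n−3)−1 vertices, where vertex x_i of Γ(∞) has valency d_i in Γ(∞). Then Σ_{i=1}^{k} d_i = 2s²n² − 2s²n − 6sn − 3s² + 9s + 2. -/
open Matrix Polynomial

set_option maxHeartbeats 1000000 in
/-- For a co-edge-regular graph (`μ = 4s`) cospectral with the `s`-clique extension of
`T(n)`, the sum of the valencies inside the local graph of any vertex `∞` equals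
`2s²n² − 2s²n − 6sn − 3s² + 9s + 2`. -/
theorem local_degree_sum {V : Type*} [Fintype V] [DecidableEq V]
    (G : SimpleGraph V) [DecidableRel G.Adj]
    (s n : ℕ) (hs : 2 ≤ s) (hn : 4 ≤ n)
    (hreg : G.IsRegularOfDegree (s * (2 * n - 3) - 1))
    (hcoedge : ∀ x y : V, x ≠ y → ¬ G.Adj x y →
      (G.neighborFinset x ∩ G.neighborFinset y).card = 4 * s)
    (hspec : (G.adjMatrix ℝ).charpoly =
      (X - C ((s : ℝ) * (2 * n - 3) - 1)) *
        (X - C ((s : ℝ) * ((n : ℝ) - 3) - 1)) ^ (n - 1) *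
        (X - C (-(s : ℝ) - 1)) ^ ((n ^ 2 - 3 * n) / 2) *
        (X - C (-1)) ^ ((s - 1) * n * (n - 1) / 2))
    (v : V) :
    (∑ y ∈ G.neighborFinset v, ((G.neighborFinset v ∩ G.neighborFinset y).card : ℤ)) =
      2 * (s : ℤ) ^ 2 * n ^ 2 - 2 * s ^ 2 * n - 6 * s * n - 3 * s ^ 2 + 9 * s + 2 := by
  classical
  obtain ⟨a, rfl⟩ : ∃ a, s = a + 2 := ⟨s - 2, by omega⟩
  obtain ⟨b, rfl⟩ : ∃ b, n = b + 4 := ⟨n - 4, by omega⟩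
  set N : ℕ := Fintype.card V with hNdef
  -- the degree k
  set k : ℕ := (a + 2) * (2 * (b + 4) - 3) - 1 with hkdef
  have hk1 : k + 1 = (a + 2) * (2 * b + 5) := by
    have h5 : 2 * (b + 4) - 3 = 2 * b + 5 := by omega
    have hge : 1 ≤ (a + 2) * (2 * b + 5) := Nat.mul_pos (by omega) (by omega)
    rw [hkdef, h5]; omega
  -- #V from the characteristic polynomial degree
  have hdeg := congrArg natDegree hspec
  rw [Matrix.charpoly_natDegree_eq_dim] at hdeg
  have hmon1 : ((X : ℝ[X]) - C (((a : ℝ) + 2) * (2 * ((b : ℝ) + 4) - 3) - 1)).Monic :=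
    monic_X_sub_C _
  have hNval : N = 1 + (b + 4 - 1) + ((b + 4) ^ 2 - 3 * (b + 4)) / 2 +
      (a + 2 - 1) * (b + 4) * (b + 4 - 1) / 2 := by
    rw [hNdef, hdeg]
    rw [Monic.natDegree_mul (((monic_X_sub_C _).mul ((monic_X_sub_C _).pow _)).mul
        ((monic_X_sub_C _).pow _)) ((monic_X_sub_C _).pow _),
      Monic.natDegree_mul ((monic_X_sub_C _).mul ((monic_X_sub_C _).pow _))
        ((monic_X_sub_C _).pow _),
      Monic.natDegree_mul (monic_X_sub_C _) ((monic_X_sub_C _).pow _),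
      natDegree_pow, natDegree_pow, natDegree_pow, natDegree_X_sub_C,
      natDegree_X_sub_C, natDegree_X_sub_C, natDegree_X_sub_C]
    simp only [mul_one]
  have hA : (b + 4) ^ 2 - 3 * (b + 4) = b * (b + 1) + 4 * (b + 1) :=
    Nat.sub_eq_of_eq_add (by ring)
  obtain ⟨c, hc⟩ := Nat.even_mul_succ_self b
  have hdvd1 : 2 ∣ (b + 4) ^ 2 - 3 * (b + 4) := by
    rw [hA]; exact ⟨c + 2 * (b + 1), by omega⟩
  have hdvd2 : 2 ∣ (a + 2 - 1) * (b + 4) * (b + 4 - 1) := by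
    have : (a + 2 - 1) * (b + 4) * (b + 4 - 1) = (a + 1) * ((b + 4) * (b + 3)) := by
      have h1 : a + 2 - 1 = a + 1 := rfl
      have h2 : b + 4 - 1 = b + 3 := rfl
      rw [h1, h2, mul_assoc]
    rw [this]
    exact Dvd.dvd.mul_left (⟨c + 3 * (b + 2), by
      have : (b + 4) * (b + 3) = b * (b + 1) + 6 * (b + 2) := by ring
      omega⟩) _
  have h2N : 2 * N = (a + 2) * ((b + 4) * (b + 3)) := by
    have e1 : 2 * (((b + 4) ^ 2 - 3 * (b + 4)) / 2) = b * (b + 1) + 4 * (b + 1) := by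
      rw [Nat.mul_div_cancel' hdvd1, hA]
    have e2 : 2 * ((a + 2 - 1) * (b + 4) * (b + 4 - 1) / 2) =
        (a + 1) * ((b + 4) * (b + 3)) := by
      rw [Nat.mul_div_cancel' hdvd2]
      have h1 : a + 2 - 1 = a + 1 := rfl
      have h2 : b + 4 - 1 = b + 3 := rfl
      rw [h1, h2, mul_assoc]
    have : 2 * N = 2 * 1 + 2 * (b + 4 - 1) + 2 * (((b + 4) ^ 2 - 3 * (b + 4)) / 2) +
        2 * ((a + 2 - 1) * (b + 4) * (b + 4 - 1) / 2) := by rw [hNval]; ring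
    rw [this, e1, e2]
    have h2 : b + 4 - 1 = b + 3 := rfl
    rw [h2]; ring
  -- degrees
  have hdegv : ∀ x : V, (G.neighborFinset x).card = k := fun x => hreg x
  -- the double counting
  set A : Finset V := G.neighborFinset v with hAdef
  set E : Finset V := Finset.univ.erase v with hEdef
  have hAsub : A ⊆ E := by
    intro x hx
    rw [hEdef, Finset.mem_erase]
    exact ⟨(G.ne_of_adj ((SimpleGraph.mem_neighborFinset _ _ _).mp hx)).symm,
      Finset.mem_univ _⟩
  have hEcard : E.card = N - 1 := by
    rw [hEdef, Finset.card_erase_of_mem (Finset.mem_univ v), Finset.card_univ]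
  have swap : ∀ (S T : Finset V),
      ∑ y ∈ T, (S ∩ G.neighborFinset y).card = ∑ x ∈ S, (T ∩ G.neighborFinset x).card := by
    intro S T
    simp only [← Finset.filter_mem_eq_inter, Finset.card_filter,
      SimpleGraph.mem_neighborFinset]
    rw [Finset.sum_comm]
    apply Finset.sum_congr rfl
    intro x _
    apply Finset.sum_congr rfl
    intro y _
    simp [SimpleGraph.adj_comm]
  have stepA : ∑ y ∈ E, (A ∩ G.neighborFinset y).card = k * (k - 1) := by
    rw [swap A E]
    have : ∀ x ∈ A, (E ∩ G.neighborFinset x).card = k - 1 := by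
      intro x hx
      have hvx : v ∈ G.neighborFinset x := by
        rw [SimpleGraph.mem_neighborFinset] at hx ⊢
        exact hx.symm
      rw [hEdef, Finset.erase_inter, Finset.univ_inter,
        Finset.card_erase_of_mem hvx, hdegv]
    rw [Finset.sum_congr rfl this, Finset.sum_const, hdegv v, smul_eq_mul]
  have hdiffval : ∀ y ∈ E \ A, (A ∩ G.neighborFinset y).card = 4 * (a + 2) := by
    intro y hy
    rw [Finset.mem_sdiff] at hy
    have hne : v ≠ y := ((Finset.mem_erase.mp hy.1).1).symm
    have hnadj : ¬ G.Adj v y := fun h =>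
      hy.2 ((SimpleGraph.mem_neighborFinset _ _ _).mpr h)
    exact hcoedge v y hne hnadj
  set S : ℕ := ∑ y ∈ A, (A ∩ G.neighborFinset y).card with hSdef
  have hsplit : S + (N - 1 - k) * (4 * (a + 2)) = k * (k - 1) := by
    rw [hSdef]
    have := Finset.sum_inter_add_sum_sdiff E A (fun y => (A ∩ G.neighborFinset y).card)
    rw [Finset.inter_eq_right.mpr hAsub] at this
    rw [← stepA, ← this]
    congr 1
    rw [Finset.sum_congr rfl hdiffval, Finset.sum_const, smul_eq_mul,
      Finset.card_sdiff_of_subset hAsub, hEcard, hdegv v]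
  -- size bounds for casting
  clear_value k N
  have hkN : k + 1 ≤ N := by
    have h1 : 2 * (k + 1) ≤ 2 * N := by
      rw [hk1, h2N]
      have : 2 * (2 * b + 5) ≤ (b + 4) * (b + 3) := by nlinarith
      calc 2 * ((a + 2) * (2 * b + 5)) = (a + 2) * (2 * (2 * b + 5)) := by ring
        _ ≤ (a + 2) * ((b + 4) * (b + 3)) := Nat.mul_le_mul_left _ this
    omega
  have hk1' : 1 ≤ k := by
    have h := Nat.mul_le_mul (show 2 ≤ a + 2 by omega) (show 5 ≤ 2 * b + 5 by omega)
    omega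
  -- cast to ℤ
  have hSZ : (S : ℤ) + ((N : ℤ) - 1 - k) * (4 * ((a : ℤ) + 2)) = (k : ℤ) * ((k : ℤ) - 1) := by
    have h1 : ((N - 1 - k : ℕ) : ℤ) = (N : ℤ) - 1 - k := by
      have e1 : k ≤ N - 1 := by omega
      have e2 : 1 ≤ N := by omega
      push_cast [Nat.cast_sub e1, Nat.cast_sub e2]
      ring
    have h2 : ((k - 1 : ℕ) : ℤ) = (k : ℤ) - 1 := by push_cast [Nat.cast_sub hk1']; ring
    have h3 := congrArg (Nat.cast : ℕ → ℤ) hsplit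
    push_cast [h1, h2] at h3
    linarith
  have hkZ : (k : ℤ) = ((a : ℤ) + 2) * (2 * b + 5) - 1 := by
    have h : ((k : ℤ) + 1) = ((a : ℤ) + 2) * (2 * (b : ℤ) + 5) := by exact_mod_cast hk1
    linarith
  have hNZ : 2 * (N : ℤ) = ((a : ℤ) + 2) * (((b : ℤ) + 4) * ((b : ℤ) + 3)) := by
    exact_mod_cast h2N
  rw [hkZ] at hSZ
  have hgoal : ((S : ℕ) : ℤ) = ∑ y ∈ A, ((A ∩ G.neighborFinset y).card : ℤ) := by
    rw [hSdef]; exact Nat.cast_sum _ _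
  rw [← hgoal]
  push_cast
  linear_combination hSZ - 2 * ((a : ℤ) + 2) * hNZ
end

section
/- Let Γ be a co-edge-regular graph with μ = 4s cospectral with the s-clique extension of T(n), n ≥ 55, and fix a vertex ∞. Let E = {y ∼ ∞ : d_y > (3/4)s(n−1)}, where d_y is the valency of y in the local graph Γ(∞). Then the subgraph induced on E contains no coclique of size 3. -/
set_option maxHeartbeats 800000


open Matrix Polynomial

/-- For a co-edge-regular graph (`μ = 4s`) cospectral with the `s`-clique extension of
`T(n)` with `n ≥ 55`, the set `E` of neighbours of a fixed vertex `∞` having more than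
`(3/4)s(n−1)` neighbours inside the local graph contains no coclique of size 3. -/
theorem no_coclique_of_three {V : Type*} [Fintype V] [DecidableEq V]
    (G : SimpleGraph V) [DecidableRel G.Adj]
    (s n : ℕ) (hs : 2 ≤ s) (hn : 55 ≤ n)
    (hreg : G.IsRegularOfDegree (s * (2 * n - 3) - 1))
    (hcoedge : ∀ x y : V, x ≠ y → ¬ G.Adj x y →
      (G.neighborFinset x ∩ G.neighborFinset y).card = 4 * s)
    (hspec : (G.adjMatrix ℝ).charpoly =
      (X - C ((s : ℝ) * (2 * n - 3) - 1)) *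
        (X - C ((s : ℝ) * ((n : ℝ) - 3) - 1)) ^ (n - 1) *
        (X - C (-(s : ℝ) - 1)) ^ ((n ^ 2 - 3 * n) / 2) *
        (X - C (-1)) ^ ((s - 1) * n * (n - 1) / 2))
    (v : V) (x₁ x₂ x₃ : V)
    (ha₁ : G.Adj v x₁) (ha₂ : G.Adj v x₂) (ha₃ : G.Adj v x₃)
    (hd₁ : (3 : ℝ) / 4 * s * ((n : ℝ) - 1) < (G.neighborFinset v ∩ G.neighborFinset x₁).card)
    (hd₂ : (3 : ℝ) / 4 * s * ((n : ℝ) - 1) < (G.neighborFinset v ∩ G.neighborFinset x₂).card)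
    (hd₃ : (3 : ℝ) / 4 * s * ((n : ℝ) - 1) < (G.neighborFinset v ∩ G.neighborFinset x₃).card)
    (h12 : x₁ ≠ x₂) (h13 : x₁ ≠ x₃) (h23 : x₂ ≠ x₃)
    (hn12 : ¬ G.Adj x₁ x₂) (hn13 : ¬ G.Adj x₁ x₃) (hn23 : ¬ G.Adj x₂ x₃) :
    False := by
  classical
  set A₁ := G.neighborFinset v ∩ G.neighborFinset x₁ with hA₁
  set A₂ := G.neighborFinset v ∩ G.neighborFinset x₂ with hA₂
  set A₃ := G.neighborFinset v ∩ G.neighborFinset x₃ with hA₃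
  have c12 : (A₁ ∩ A₂).card ≤ 4 * s := by
    rw [← hcoedge x₁ x₂ h12 hn12]
    apply Finset.card_le_card
    intro z hz
    simp only [hA₁, hA₂, Finset.mem_inter] at hz ⊢
    tauto
  have c13 : (A₁ ∩ A₃).card ≤ 4 * s := by
    rw [← hcoedge x₁ x₃ h13 hn13]
    apply Finset.card_le_card
    intro z hz
    simp only [hA₁, hA₃, Finset.mem_inter] at hz ⊢
    tauto
  have c23 : (A₂ ∩ A₃).card ≤ 4 * s := by
    rw [← hcoedge x₂ x₃ h23 hn23]
    apply Finset.card_le_card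
    intro z hz
    simp only [hA₂, hA₃, Finset.mem_inter] at hz ⊢
    tauto
  have hu2 : (A₁ ∪ A₂).card + (A₁ ∩ A₂).card = A₁.card + A₂.card :=
    Finset.card_union_add_card_inter _ _
  have hu3 : ((A₁ ∪ A₂) ∪ A₃).card + ((A₁ ∪ A₂) ∩ A₃).card = (A₁ ∪ A₂).card + A₃.card :=
    Finset.card_union_add_card_inter _ _
  have hint : ((A₁ ∪ A₂) ∩ A₃).card ≤ (A₁ ∩ A₃).card + (A₂ ∩ A₃).card := by
    calc ((A₁ ∪ A₂) ∩ A₃).card ≤ ((A₁ ∩ A₃) ∪ (A₂ ∩ A₃)).card := by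
          apply Finset.card_le_card
          intro z hz
          simp only [Finset.mem_inter, Finset.mem_union] at hz ⊢
          tauto
      _ ≤ (A₁ ∩ A₃).card + (A₂ ∩ A₃).card := Finset.card_union_le _ _
  have hsubv : (A₁ ∪ A₂) ∪ A₃ ⊆ G.neighborFinset v := by
    intro z hz
    simp only [hA₁, hA₂, hA₃, Finset.mem_union, Finset.mem_inter] at hz
    tauto
  have hdeg : (G.neighborFinset v).card = s * (2 * n - 3) - 1 := hreg v
  have htop : ((A₁ ∪ A₂) ∪ A₃).card ≤ s * (2 * n - 3) - 1 := by
    rw [← hdeg]; exact Finset.card_le_card hsubv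
  have key : A₁.card + A₂.card + A₃.card ≤ s * (2 * n - 3) - 1 + 12 * s := by omega
  have h1 : 1 ≤ s * (2 * n - 3) :=
    Nat.one_le_iff_ne_zero.mpr (Nat.mul_ne_zero (by omega) (by omega))
  have hkey' : (A₁.card : ℝ) + A₂.card + A₃.card
      ≤ (s : ℝ) * (2 * n - 3) - 1 + 12 * s := by
    have := (Nat.cast_le (α := ℝ)).2 key
    push_cast [Nat.cast_sub h1, Nat.cast_sub (by omega : 3 ≤ 2 * n)] at this
    linarith
  have hs' : (2 : ℝ) ≤ s := by exact_mod_cast hs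
  have hn' : (55 : ℝ) ≤ n := by exact_mod_cast hn
  nlinarith [hd₁, hd₂, hd₃, mul_nonneg (by linarith : (0:ℝ) ≤ (s:ℝ)) (by linarith : (0:ℝ) ≤ (n:ℝ) - 55)]
end

section
/- Let q₁, ..., q_{2s} be nonnegative integers with Σ_{i=1}^{2s} (s(n−3)+i) q_i = sn(n−1), where s ≥ 2 and n > 10. Then δ := Σᵢ qᵢ satisfies n ≤ δ ≤ n + 2, and if δ = n then q_i = 0 for all i < 2s and q_{2s} = n. -/
/-- Arithmetic core of Lemma 4.1: if `q₁, ..., q_{2s}` are nonnegative integers with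
`Σ (s(n−3)+i)·qᵢ = sn(n−1)` (`s ≥ 2`, `n > 10`), then `δ = Σ qᵢ` satisfies
`n ≤ δ ≤ n + 2`, and `δ = n` forces `qᵢ = 0` for `i < 2s` and `q_{2s} = n`. -/
theorem line_count (s n : ℕ) (hs : 2 ≤ s) (hn : 10 < n) (q : ℕ → ℕ)
    (hsum : ∑ i ∈ Finset.Icc 1 (2 * s), (s * (n - 3) + i) * q i = s * n * (n - 1)) :
    n ≤ ∑ i ∈ Finset.Icc 1 (2 * s), q i ∧
    (∑ i ∈ Finset.Icc 1 (2 * s), q i) ≤ n + 2 ∧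
    ((∑ i ∈ Finset.Icc 1 (2 * s), q i) = n →
      (∀ i, 1 ≤ i → i < 2 * s → q i = 0) ∧ q (2 * s) = n) := by
  obtain ⟨m, rfl⟩ : ∃ m, n = m + 11 := ⟨n - 11, by omega⟩
  have h3 : m + 11 - 3 = m + 8 := by omega
  have h1 : m + 11 - 1 = m + 10 := by omega
  rw [h3, h1] at hsum
  set S := Finset.Icc 1 (2 * s) with hS
  set δ := ∑ i ∈ S, q i with hδ
  -- termwise upper bound: each coefficient ≤ s*(m+10)
  have hcoef : ∀ i ∈ S, (s * (m + 8) + i) * q i ≤ s * (m + 10) * q i := by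
    intro i hi
    rw [Finset.mem_Icc] at hi
    have : s * (m + 8) + i ≤ s * (m + 10) := by nlinarith [hi.2]
    exact Nat.mul_le_mul_right _ this
  have hub : s * (m + 11) * (m + 10) ≤ s * (m + 10) * δ := by
    calc s * (m + 11) * (m + 10) = ∑ i ∈ S, (s * (m + 8) + i) * q i := hsum.symm
      _ ≤ ∑ i ∈ S, s * (m + 10) * q i := Finset.sum_le_sum hcoef
      _ = s * (m + 10) * δ := (Finset.mul_sum _ _ _).symm
  have hlb : (s * (m + 8) + 1) * δ ≤ s * (m + 11) * (m + 10) := by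
    calc (s * (m + 8) + 1) * δ = ∑ i ∈ S, (s * (m + 8) + 1) * q i := Finset.mul_sum _ _ _
      _ ≤ ∑ i ∈ S, (s * (m + 8) + i) * q i := by
          refine Finset.sum_le_sum fun i hi => ?_
          rw [Finset.mem_Icc] at hi
          exact Nat.mul_le_mul_right _ (by omega)
      _ = s * (m + 11) * (m + 10) := hsum
  have hpos : 0 < s * (m + 10) := by positivity
  have hlow : m + 11 ≤ δ := by
    have h' : s * (m + 10) * (m + 11) ≤ s * (m + 10) * δ := by
      calc s * (m + 10) * (m + 11) = s * (m + 11) * (m + 10) := by ring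
        _ ≤ s * (m + 10) * δ := hub
    exact Nat.le_of_mul_le_mul_left h' hpos
  refine ⟨hlow, ?_, ?_⟩
  · by_contra h
    push_neg at h
    have h14 : m + 14 ≤ δ := by omega
    have h' : (s * (m + 8) + 1) * (m + 14) ≤ s * (m + 11) * (m + 10) :=
      le_trans (Nat.mul_le_mul_left _ h14) hlb
    nlinarith [h', hs]
  · intro heq
    -- equality case: all termwise upper bounds are equalities
    have hsum2 : ∑ i ∈ S, s * (m + 10) * q i = ∑ i ∈ S, (s * (m + 8) + i) * q i := by
      rw [hsum, ← Finset.mul_sum, ← hδ, heq]; ring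
    have hall : ∀ i ∈ S, (s * (m + 8) + i) * q i = s * (m + 10) * q i :=
      (Finset.sum_eq_sum_iff_of_le hcoef).mp hsum2.symm
    have hzero : ∀ i, 1 ≤ i → i < 2 * s → q i = 0 := by
      intro i h1i h2i
      have hiS : i ∈ S := Finset.mem_Icc.mpr ⟨h1i, by omega⟩
      by_contra hq
      have hq1 : 1 ≤ q i := Nat.one_le_iff_ne_zero.mpr hq
      have hlt : s * (m + 8) + i < s * (m + 10) := by nlinarith
      have heq' := hall i hiS
      have hlt2 : (s * (m + 8) + i) * q i < (s * (m + 10)) * q i :=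
        Nat.mul_lt_mul_of_lt_of_le hlt (le_refl _) hq1
      omega
    refine ⟨hzero, ?_⟩
    have h2S : 2 * s ∈ S := Finset.mem_Icc.mpr ⟨by omega, le_refl _⟩
    have : δ = q (2 * s) := by
      rw [hδ]
      refine Finset.sum_eq_single_of_mem _ h2S fun i hi hne => ?_
      rw [Finset.mem_Icc] at hi
      exact hzero i hi.1 (lt_of_le_of_ne hi.2 hne)
    omega
end
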